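/- There exists a probability measure π on ℝ with finite second moment (∫ y² dπ(y) < ∞) such that for every t > 0, the supremum over x ∈ ℝ of the variance of the isotropic tilt T_{t,tx}π is infinite: sup_{x∈ℝ} Var(T_{t,tx}π) = ∞, i.e., the susceptibility χ_t(π) = ∞ for every t > 0. -/

import Mathlib

/-!
The counterexample is `π ∝ ∑ₙ exp(-aₙ³) δ_{aₙ}` with `aₙ = 2ⁿ`. Tilting multiplies the weight
of an atom `b` by `exp(-(t/2) b² + t x b)`, so the tilted log-weight of `b` is the cubic
`-b³ - (t/2) b² + t x b`. Choosing `x` so that this cubic takes the same value at `a = aₙ` and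
at `2a = aₙ₊₁` makes it drop by at least `aₘ` at every other atom `aₘ`. The tilt then puts mass
at least `1/4` on each of `a` and `2a`, so by Chebyshev its variance is at least `a²/16`.
-/

open MeasureTheory Set

noncomputable section

/-- The one-dimensional isotropic tilt `T_{t,tx}π`, with density proportional to
`exp(-(t/2)y² + t x y)` with respect to `π`. -/
def tilt1 (π : Measure ℝ) (t x : ℝ) : Measure ℝ :=
  ((π.withDensity fun y => ENNReal.ofReal (Real.exp (-(t/2) * y^2 + t * x * y))) univ)⁻¹ •
    π.withDensity fun y => ENNReal.ofReal (Real.exp (-(t/2) * y^2 + t * x * y))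

/-- Variance of a measure on `ℝ`. -/
def var1 (μ : Measure ℝ) : ℝ := (∫ y, y^2 ∂μ) - (∫ y, y ∂μ)^2

open ProbabilityTheory
open scoped ENNReal

section Tilt

variable {π : Measure ℝ} {t x : ℝ}

lemma tilt_exponent_le (ht : 0 ≤ t) (x y : ℝ) : -(t/2) * y^2 + t * x * y ≤ t * x^2 / 2 := by
  nlinarith [mul_nonneg ht (sq_nonneg (y - x))]

lemma withDensity_tilt_le_smul (ht : 0 ≤ t) :
    (π.withDensity fun y => ENNReal.ofReal (Real.exp (-(t/2) * y^2 + t * x * y))) ≤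
      ENNReal.ofReal (Real.exp (t * x^2 / 2)) • π := by
  rw [← withDensity_const]
  exact withDensity_mono <| ae_of_all _ fun y =>
    ENNReal.ofReal_le_ofReal <| Real.exp_le_exp.2 <| tilt_exponent_le ht x y

lemma tilt1_smul {c : ℝ≥0∞} (hc₀ : c ≠ 0) (hc : c ≠ ∞) : tilt1 (c • π) t x = tilt1 π t x := by
  simp only [tilt1, withDensity_smul_measure, Measure.smul_apply, smul_eq_mul, smul_smul]
  rw [ENNReal.mul_inv (.inl hc₀) (.inl hc), mul_right_comm, ENNReal.inv_mul_cancel hc₀ hc, one_mul]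

lemma isProbabilityMeasure_tilt1 [IsFiniteMeasure π] [NeZero π] (ht : 0 ≤ t) :
    IsProbabilityMeasure (tilt1 π t x) := by
  have := π.smul_finite (ENNReal.ofReal_ne_top (r := Real.exp (t * x^2 / 2)))
  have := isFiniteMeasure_of_le _ (withDensity_tilt_le_smul (π := π) (x := x) ht)
  have : NeZero (π.withDensity fun y => ENNReal.ofReal (Real.exp (-(t/2) * y^2 + t * x * y))) := by
    refine ⟨fun h => NeZero.ne π ?_⟩
    rw [withDensity_eq_zero_iff (by fun_prop)] at h
    have : ∀ᵐ y ∂π, False := h.mono fun y hy => (Real.exp_pos _).not_ge (by simpa using hy)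
    simpa using this
  exact isProbabilityMeasureSMul

lemma integrable_tilt1 {f : ℝ → ℝ} (hf : Integrable f π) (ht : 0 ≤ t) :
    Integrable f (tilt1 π t x) :=
  (hf.of_measure_le_smul ENNReal.ofReal_ne_top (withDensity_tilt_le_smul ht)).to_average

end Tilt

lemma le_var1_of_le_measureReal_singleton {μ : Measure ℝ} [IsProbabilityMeasure μ]
    (hμ : Integrable (fun y => y^2) μ) {p q c : ℝ} (hpq : p < q)
    (hp : c ≤ μ.real {p}) (hq : c ≤ μ.real {q}) : c * ((q - p) / 2)^2 ≤ var1 μ := by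
  have hX : MemLp id 2 μ := (memLp_two_iff_integrable_sq aestronglyMeasurable_id).2 hμ
  have hvar : var1 μ = variance id μ := by
    rw [variance_eq_sub hX]; rfl
  set d := (q - p) / 2
  have hd : 0 < d := by simp only [d]; linarith
  obtain ⟨r, hcr, hdr⟩ : ∃ r, c ≤ μ.real {r} ∧ d ≤ |r - μ[id]| := by
    by_cases h : d ≤ |p - μ[id]|
    · exact ⟨p, hp, h⟩
    · refine ⟨q, hq, ?_⟩
      simp only [d] at h ⊢
      cases abs_cases (p - μ[id]) <;> cases abs_cases (q - μ[id]) <;> linarith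
  have hcheb : μ.real {r} ≤ variance id μ / d^2 :=
    (measureReal_mono fun y (hy : y = r) => by simpa [hy] using hdr).trans <|
      ENNReal.toReal_le_of_le_ofReal (by have := variance_nonneg id μ; positivity)
        (meas_ge_le_variance_div_sq hX hd)
  rw [hvar, ← le_div_iff₀ (by positivity)]
  exact hcr.trans hcheb

section AtomicMeasure

variable {α ι : Type*} [MeasurableSpace α]

def atomicMeasure (w : ι → ℝ≥0∞) (a : ι → α) : Measure α :=
  Measure.sum fun i => w i • Measure.dirac (a i)

variable (w : ι → ℝ≥0∞) (a : ι → α)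

lemma atomicMeasure_apply_univ : atomicMeasure w a univ = ∑' i, w i := by
  simp [atomicMeasure]

lemma le_atomicMeasure_apply_singleton [MeasurableSingletonClass α] (i : ι) :
    w i ≤ atomicMeasure w a {a i} := by
  have := Measure.le_sum (fun i => w i • Measure.dirac (a i)) i {a i}
  simpa [atomicMeasure] using this

lemma withDensity_atomicMeasure [MeasurableSingletonClass α] (f : α → ℝ≥0∞) :
    (atomicMeasure w a).withDensity f = atomicMeasure (fun i => w i * f (a i)) a := by
  simp only [atomicMeasure, withDensity_sum, withDensity_smul_measure, dirac_withDensity,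
    smul_smul]

lemma lintegral_atomicMeasure [MeasurableSingletonClass α] (f : α → ℝ≥0∞) :
    ∫⁻ y, f y ∂atomicMeasure w a = ∑' i, w i * f (a i) := by
  simp [atomicMeasure, lintegral_sum_measure, lintegral_smul_measure]

end AtomicMeasure

lemma tsum_le_four_mul_of_decay {w : ℕ → ℝ≥0∞} {n : ℕ} (hsucc : w (n + 1) ≤ w n)
    (hdecay : ∀ m, m ≠ n → m ≠ n + 1 → w m ≤ w n * 2⁻¹ ^ m) : ∑' m, w m ≤ 4 * w n := by
  have hle : ∀ m, w m ≤ ((if m = n then w n else 0) + (if m = n + 1 then w n else 0)) +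
      w n * 2⁻¹ ^ m := by
    intro m
    by_cases h₀ : m = n
    · subst h₀; simp
    by_cases h₁ : m = n + 1
    · subst h₁; simpa using le_add_right hsucc
    · simpa [h₀, h₁] using hdecay m h₀ h₁
  calc ∑' m, w m
      ≤ ∑' m, (((if m = n then w n else 0) + (if m = n + 1 then w n else 0)) +
          w n * 2⁻¹ ^ m) := ENNReal.tsum_le_tsum hle
    _ = w n + w n + w n * 2 := by
      rw [ENNReal.tsum_add, ENNReal.tsum_add, tsum_ite_eq, tsum_ite_eq, ENNReal.tsum_mul_left,
        ENNReal.tsum_geometric, ENNReal.one_sub_inv_two, inv_inv]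
    _ = 4 * w n := by ring

lemma exp_neg_cube_mul_sq_le_inv {b : ℝ} (hb : 0 < b) : Real.exp (-b^3) * b^2 ≤ b⁻¹ := by
  have h : b^3 * Real.exp (-b^3) ≤ 1 := by
    have := Real.add_one_le_exp (b^3)
    rw [Real.exp_neg, ← div_eq_mul_inv, div_le_one (Real.exp_pos _)]
    linarith
  calc Real.exp (-b^3) * b^2 = b^3 * Real.exp (-b^3) / b := by field_simp
    _ ≤ 1 / b := by gcongr
    _ = b⁻¹ := one_div b

lemma exp_neg_two_pow_le (m : ℕ) : Real.exp (-(2:ℝ)^m) ≤ 2⁻¹ ^ m := by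
  rw [Real.exp_neg, inv_pow]
  gcongr
  linarith [Real.add_one_le_exp ((2:ℝ)^m)]

def cubicTiltExponent (t x b : ℝ) : ℝ := -b^3 - (t/2) * b^2 + t * x * b

-- the root of `cubicTiltExponent t x (2 * a) = cubicTiltExponent t x a` in `x`
def peakTilt (t a : ℝ) : ℝ := 7 * a^2 / t + 3 * a / 2

lemma cubicTiltExponent_peakTilt_sub {t : ℝ} (ht : t ≠ 0) (a b : ℝ) :
    cubicTiltExponent t (peakTilt t a) b - cubicTiltExponent t (peakTilt t a) a =
      (b - a) * (2 * a - b) * (3 * a + b + t/2) := by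
  simp only [cubicTiltExponent, peakTilt]
  field_simp
  ring

lemma cubic_gap_le {t a b : ℝ} (ht : 0 ≤ t) (ha : 1 ≤ a) (hb : 0 < b)
    (h : 2 * b ≤ a ∨ 4 * a ≤ b) :
    (b - a) * (2 * a - b) * (3 * a + b + t/2) ≤ -b := by
  rcases h with h | h
  · have hP : a / 2 * (3 * a / 2) ≤ (a - b) * (2 * a - b) := by gcongr <;> linarith
    have hPQ : a / 2 * (3 * a / 2) * (3 * a) ≤ (a - b) * (2 * a - b) * (3 * a + b + t/2) := by
      gcongr
      · nlinarith
      · linarith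
    have ha3 : a ≤ a^3 := le_self_pow₀ ha (by norm_num)
    linarith
  · have hP : 3 * b / 4 * (b / 2) ≤ (b - a) * (b - 2 * a) := by gcongr <;> linarith
    have hPQ : 3 * b / 4 * (b / 2) * b ≤ (b - a) * (b - 2 * a) * (3 * a + b + t/2) := by
      gcongr
      · nlinarith
      · linarith
    have hb16 : 16 ≤ b * b := by nlinarith
    have hb3 := mul_le_mul_of_nonneg_left hb16 hb.le
    linarith

def cubicAtoms : Measure ℝ :=
  atomicMeasure (fun n : ℕ => ENNReal.ofReal (Real.exp (-((2:ℝ)^n)^3))) (fun n => (2:ℝ)^n)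

lemma ofReal_exp_neg_cube_mul_sq_two_pow_le (n : ℕ) :
    ENNReal.ofReal (Real.exp (-((2:ℝ)^n)^3) * ((2:ℝ)^n)^2) ≤ 2⁻¹ ^ n :=
  calc _ ≤ ENNReal.ofReal ((2:ℝ)^n)⁻¹ :=
        ENNReal.ofReal_le_ofReal (exp_neg_cube_mul_sq_le_inv (by positivity))
    _ = 2⁻¹ ^ n := by
        rw [ENNReal.ofReal_inv_of_pos (by positivity), ENNReal.ofReal_pow zero_le_two,
          ENNReal.ofReal_ofNat, ENNReal.inv_pow]

lemma tsum_two_inv_pow_lt_top : ∑' n : ℕ, (2⁻¹ : ℝ≥0∞) ^ n < ∞ :=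
  tsum_geometric_lt_top.2 (by norm_num)

lemma integrable_sq_cubicAtoms : Integrable (fun y => y^2) cubicAtoms := by
  refine ⟨by fun_prop, ?_⟩
  rw [HasFiniteIntegral, cubicAtoms, lintegral_atomicMeasure]
  refine lt_of_le_of_lt (ENNReal.tsum_le_tsum fun n => ?_) tsum_two_inv_pow_lt_top
  rw [Real.enorm_of_nonneg (by positivity), ← ENNReal.ofReal_mul (Real.exp_pos _).le]
  exact ofReal_exp_neg_cube_mul_sq_two_pow_le n

instance : IsFiniteMeasure cubicAtoms := by
  refine ⟨?_⟩
  rw [cubicAtoms, atomicMeasure_apply_univ]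
  refine lt_of_le_of_lt (ENNReal.tsum_le_tsum fun n => ?_) tsum_two_inv_pow_lt_top
  refine le_trans (ENNReal.ofReal_le_ofReal ?_) (ofReal_exp_neg_cube_mul_sq_two_pow_le n)
  exact le_mul_of_one_le_right (Real.exp_pos _).le (one_le_pow₀ (one_le_pow₀ one_le_two))

instance : NeZero cubicAtoms := by
  refine ⟨fun h => ?_⟩
  have := le_atomicMeasure_apply_singleton
    (fun n : ℕ => ENNReal.ofReal (Real.exp (-((2:ℝ)^n)^3))) (fun n => (2:ℝ)^n) 0
  rw [← cubicAtoms, h] at this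
  simp only [Measure.coe_zero, Pi.zero_apply, nonpos_iff_eq_zero, ENNReal.ofReal_eq_zero] at this
  exact (Real.exp_pos _).not_ge this

lemma withDensity_cubicAtoms (t x : ℝ) :
    cubicAtoms.withDensity (fun y => ENNReal.ofReal (Real.exp (-(t/2) * y^2 + t * x * y))) =
      atomicMeasure (fun n : ℕ => ENNReal.ofReal (Real.exp (cubicTiltExponent t x (2^n))))
        (fun n => 2^n) := by
  rw [cubicAtoms, withDensity_atomicMeasure]
  congr 1
  funext n
  rw [← ENNReal.ofReal_mul (Real.exp_pos _).le, ← Real.exp_add, cubicTiltExponent]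
  ring_nf

lemma cubicTiltExponent_peakTilt_two_mul {t : ℝ} (ht : t ≠ 0) (a : ℝ) :
    cubicTiltExponent t (peakTilt t a) (2 * a) = cubicTiltExponent t (peakTilt t a) a := by
  linarith [cubicTiltExponent_peakTilt_sub ht a (2 * a)]

lemma cubicTiltExponent_peakTilt_two_pow_le {t : ℝ} (ht : 0 < t) {n m : ℕ} (hmn : m ≠ n)
    (hmn' : m ≠ n + 1) :
    cubicTiltExponent t (peakTilt t (2^n)) (2^m) ≤
      cubicTiltExponent t (peakTilt t (2^n)) (2^n) - 2^m := by
  have hgap : 2 * (2:ℝ)^m ≤ 2^n ∨ 4 * (2:ℝ)^n ≤ 2^m := by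
    rcases lt_or_gt_of_ne hmn with h | h
    · left
      calc 2 * (2:ℝ)^m = 2^(m + 1) := by ring
        _ ≤ 2^n := pow_le_pow_right₀ one_le_two h
    · right
      calc 4 * (2:ℝ)^n = 2^(n + 2) := by ring
        _ ≤ 2^m := pow_le_pow_right₀ one_le_two (by omega)
  linarith [cubicTiltExponent_peakTilt_sub ht.ne' (2^n) (2^m),
    cubic_gap_le ht.le (one_le_pow₀ one_le_two) (by positivity) hgap]

lemma inv_four_le_tilt1_cubicAtoms {t : ℝ} (ht : 0 < t) (n : ℕ) {m : ℕ}
    (hm : m = n ∨ m = n + 1) :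
    4⁻¹ ≤ tilt1 cubicAtoms t (peakTilt t (2^n)) {2^m} := by
  set E := cubicTiltExponent t (peakTilt t (2^n))
  set w : ℕ → ℝ≥0∞ := fun k => ENNReal.ofReal (Real.exp (E (2^k)))
  have hsucc : w (n + 1) = w n := by
    simp only [w, E, pow_succ, mul_comm _ (2:ℝ), cubicTiltExponent_peakTilt_two_mul ht.ne']
  have hdecay : ∀ k, k ≠ n → k ≠ n + 1 → w k ≤ w n * 2⁻¹ ^ k := by
    intro k hk hk'
    calc w k ≤ ENNReal.ofReal (Real.exp (E (2^n)) * 2⁻¹ ^ k) := by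
          refine ENNReal.ofReal_le_ofReal ?_
          calc Real.exp (E (2^k)) ≤ Real.exp (E (2^n) + -2^k) :=
                Real.exp_le_exp.2 (by linarith [cubicTiltExponent_peakTilt_two_pow_le ht hk hk'])
            _ ≤ Real.exp (E (2^n)) * 2⁻¹ ^ k := by
                rw [Real.exp_add]; gcongr; exact exp_neg_two_pow_le k
      _ = w n * 2⁻¹ ^ k := by
          rw [ENNReal.ofReal_mul (Real.exp_pos _).le, ENNReal.ofReal_pow (by norm_num),
            ENNReal.ofReal_inv_of_pos two_pos, ENNReal.ofReal_ofNat]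
  have hwm : w m = w n := by rcases hm with rfl | rfl <;> simp [hsucc]
  have hwn : w n ≠ 0 := by simp [w, Real.exp_pos]
  rw [tilt1, withDensity_cubicAtoms, Measure.smul_apply, atomicMeasure_apply_univ, smul_eq_mul]
  calc 4⁻¹ = (4 * w n)⁻¹ * w n := by
        rw [ENNReal.mul_inv (by simp) (by simp), mul_assoc,
          ENNReal.inv_mul_cancel hwn ENNReal.ofReal_ne_top, mul_one]
    _ ≤ (∑' k, w k)⁻¹ * atomicMeasure w (fun k => (2:ℝ)^k) {2^m} := by
        gcongr
        · exact tsum_le_four_mul_of_decay hsucc.le hdecay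
        · exact hwm ▸ le_atomicMeasure_apply_singleton w _ m

/-- **Susceptibility blow-up.**  There exists a probability measure `π` on `ℝ` with finite
second moment such that for every `t > 0` the susceptibility
`χ_t(π) = sup_x Var(T_{t,tx}π)` is infinite, i.e., the variances of the isotropic tilts are
unbounded over `x`. -/
theorem susceptibility_blowup :
    ∃ π : Measure ℝ, IsProbabilityMeasure π ∧
      Integrable (fun y => y^2) π ∧
      ∀ t : ℝ, 0 < t → ∀ C : ℝ, ∃ x : ℝ, C < var1 (tilt1 π t x) := by
  refine ⟨(cubicAtoms univ)⁻¹ • cubicAtoms, inferInstance, integrable_sq_cubicAtoms.to_average,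
    fun t ht C => ?_⟩
  obtain ⟨n, hn⟩ := pow_unbounded_of_one_lt (16 * C) (one_lt_two (α := ℝ))
  refine ⟨peakTilt t (2^n), ?_⟩
  rw [tilt1_smul (ENNReal.inv_ne_zero.2 (measure_ne_top _ _))
    (ENNReal.inv_ne_top.2 (NeZero.ne _))]
  have := isProbabilityMeasure_tilt1 (π := cubicAtoms) (x := peakTilt t (2^n)) ht.le
  have hmass : ∀ m, m = n ∨ m = n + 1 →
      4⁻¹ ≤ (tilt1 cubicAtoms t (peakTilt t (2^n))).real {2^m} := fun m hm => by
    simpa [Measure.real] using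
      ENNReal.toReal_mono (measure_ne_top _ _) (inv_four_le_tilt1_cubicAtoms ht n hm)
  calc C < 4⁻¹ * ((2^(n + 1) - 2^n) / 2)^2 := by
        have : (2:ℝ)^n ≤ ((2:ℝ)^n)^2 := le_self_pow₀ (one_le_pow₀ one_le_two) two_ne_zero
        have hsq : 4⁻¹ * ((2^(n + 1) - 2^n) / 2)^2 = ((2:ℝ)^n)^2 / 16 := by ring
        linarith
    _ ≤ var1 _ :=
        le_var1_of_le_measureReal_singleton (integrable_tilt1 integrable_sq_cubicAtoms ht.le)
          (pow_lt_pow_right₀ one_lt_two n.lt_succ_self) (hmass n (.inl rfl))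
          (hmass (n + 1) (.inr rfl))
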